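/- Let $T$ be an $n$-dimensional LFMO random vector with Laplace exponent $\psi$ and let $T_{m:n}$ be its $m$-th increasing order statistic. Then for all $m = 1,\dots,n$ and $t \ge 0$, $\mathbb{P}(T_{m:n} > t) = \sum_{k=n-m+1}^{n} e^{-\psi(k) t} \binom{n}{k} \binom{k-1}{n-m} (-1)^{k-n+m-1}$. -/

import Mathlib

open MeasureTheory ProbabilityTheory NNReal ENNReal Finset

/-!
Fix `t`. Since the paths of `S` are nondecreasing and right-continuous, `t < T_i` iff
`S_t < ε_i`, so `t < T_{m:n}` iff at least `r = n - m + 1` of the events `B_i = {S_t < ε_i}`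
occur. As the `ε_i` are iid unit exponentials independent of `S_t`, any `k` of these events occur
together with probability `E e^{-k S_t} = e^{-t ψ(k)}`. Integrating the identity
`1{r ≤ N} = ∑_{k ≥ r} (-1)^{k-r} C(k-1, r-1) C(N, k)` for `N = #{i | B_i occurs}`, and writing
`C(N, k)` as the number of `k`-sets of occurring events, gives the formula.
-/

theorem sum_Icc_neg_one_pow_mul_choose_mul_choose {a N : ℕ} (h : a < N) :
    ∑ j ∈ Icc a N, (-1 : ℤ) ^ j * j.choose a * N.choose j = 0 := by
  calc ∑ j ∈ Icc a N, (-1 : ℤ) ^ j * j.choose a * N.choose j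
      = ∑ i ∈ range (N - a + 1), (-1 : ℤ) ^ (a + i) * (a + i).choose a * N.choose (a + i) := by
        rw [← Ico_add_one_right_eq_Icc, sum_Ico_eq_sum_range, Nat.sub_add_comm h.le]
    _ = (-1) ^ a * N.choose a * ∑ i ∈ range (N - a + 1), (-1 : ℤ) ^ i * (N - a).choose i := by
        rw [mul_sum]
        refine sum_congr rfl fun i _ => ?_
        have := Nat.choose_mul (n := N) (le_add_right le_rfl : a ≤ a + i)
        rw [Nat.add_sub_cancel_left] at this
        rw [pow_add, mul_assoc _ _ ((N.choose (a + i) : ℕ) : ℤ), mul_comm ((a + i).choose a : ℤ),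
          ← Nat.cast_mul, this, Nat.cast_mul]
        ring
    _ = 0 := by rw [Int.alternating_sum_range_choose_of_ne (by omega), mul_zero]

theorem sum_Icc_neg_one_pow_mul_choose_pred_mul_choose {r N : ℕ} (hr : 1 ≤ r) (h : r ≤ N) :
    ∑ k ∈ Icc r N, (-1 : ℤ) ^ k * (k - 1).choose (r - 1) * N.choose k = (-1) ^ r := by
  induction N, h using Nat.le_induction with
  | base => simp
  | succ N hN ih =>
    have pascal : ∀ k ∈ Icc r (N + 1), (-1 : ℤ) ^ k * (k - 1).choose (r - 1) * (N + 1).choose k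
        = (-1) ^ k * (k - 1).choose (r - 1) * N.choose k
          - (-1) ^ (k - 1) * (k - 1).choose (r - 1) * N.choose (k - 1) := by
      intro k hk
      obtain ⟨j, rfl⟩ : ∃ j, k = j + 1 := ⟨k - 1, by grind⟩
      rw [Nat.choose_succ_succ', Nat.add_sub_cancel, pow_succ]
      push_cast
      ring
    have shift :
        ∑ k ∈ Icc r (N + 1), (-1 : ℤ) ^ (k - 1) * (k - 1).choose (r - 1) * N.choose (k - 1)
        = ∑ j ∈ Icc (r - 1) N, (-1 : ℤ) ^ j * j.choose (r - 1) * N.choose j := by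
      obtain ⟨s, rfl⟩ := Nat.exists_eq_add_of_le' hr
      rw [← map_add_right_Icc, sum_map]
      simp
    rw [sum_congr rfl pascal, sum_sub_distrib, shift,
      sum_Icc_neg_one_pow_mul_choose_mul_choose (by omega), sum_Icc_succ_top (by omega), ih]
    simp

theorem ite_le_eq_sum_Icc_neg_one_pow_mul_choose {r N n : ℕ} (hr : 1 ≤ r) (hN : N ≤ n) :
    (if r ≤ N then 1 else 0 : ℤ) =
      ∑ k ∈ Icc r n, (-1 : ℤ) ^ (k + r) * (k - 1).choose (r - 1) * N.choose k := by
  rw [← sum_subset (Icc_subset_Icc_right hN) fun k hk hkN => by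
    rw [Nat.choose_eq_zero_of_lt (show N < k by grind), Nat.cast_zero, mul_zero]]
  split_ifs with h
  · simp_rw [pow_add, mul_right_comm _ ((-1 : ℤ) ^ r), mul_comm _ ((-1 : ℤ) ^ r), ← mul_sum]
    rw [sum_Icc_neg_one_pow_mul_choose_pred_mul_choose hr h, ← mul_pow]
    norm_num
  · rw [Icc_eq_empty (by omega), sum_empty]

theorem sum_powersetCard_indicator_biInter {ι Ω R : Type*} [Fintype ι] [AddCommMonoidWithOne R]
    (B : ι → Set Ω) [∀ i, DecidablePred (· ∈ B i)] (k : ℕ) (ω : Ω) :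
    ∑ K ∈ powersetCard k univ, (⋂ i ∈ K, B i).indicator (1 : Ω → R) ω =
      (#{i | ω ∈ B i}).choose k := by
  classical
  have hind : ∀ K : Finset ι, (⋂ i ∈ K, B i).indicator (1 : Ω → R) ω =
      if K ⊆ ({i | ω ∈ B i} : Finset ι) then 1 else 0 := by
    intro K
    simp [Set.indicator_apply, subset_iff]
  rw [sum_congr rfl fun K _ => hind K, sum_boole, ← card_powersetCard]
  congr 2
  ext K
  simp only [mem_filter, mem_powersetCard, subset_univ, true_and]
  tauto

theorem measureReal_setOf_le_card_eq_sum {ι Ω : Type*} [Fintype ι] [MeasurableSpace Ω]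
    {μ : Measure Ω} [IsFiniteMeasure μ] {B : ι → Set Ω} [∀ i, DecidablePred (· ∈ B i)]
    (hB : ∀ i, MeasurableSet (B i)) {p : ℕ → ℝ}
    (hp : ∀ K : Finset ι, K.Nonempty → μ.real (⋂ i ∈ K, B i) = p #K) {r : ℕ} (hr : 1 ≤ r) :
    μ.real {ω | r ≤ #{i | ω ∈ B i}} = ∑ k ∈ Icc r (Fintype.card ι),
      (-1) ^ (k + r) * (k - 1).choose (r - 1) * (Fintype.card ι).choose k * p k := by
  set n := Fintype.card ι
  have hinter : ∀ K : Finset ι, MeasurableSet (⋂ i ∈ K, B i) :=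
    fun K => K.measurableSet_biInter fun i _ => hB i
  have hintegrable : ∀ K : Finset ι, Integrable ((⋂ i ∈ K, B i).indicator (1 : Ω → ℝ)) μ :=
    fun K => (integrable_const 1).indicator (hinter K)
  have hpoint : {ω | r ≤ #{i | ω ∈ B i}}.indicator (1 : Ω → ℝ) = fun ω => ∑ k ∈ Icc r n,
      ((-1) ^ (k + r) * (k - 1).choose (r - 1) : ℝ) *
        ∑ K ∈ powersetCard k univ, (⋂ i ∈ K, B i).indicator 1 ω := by
    ext ω
    simp_rw [sum_powersetCard_indicator_biInter, Set.indicator_apply, Pi.one_apply]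
    exact_mod_cast ite_le_eq_sum_Icc_neg_one_pow_mul_choose hr (card_le_univ _)
  have hE : MeasurableSet {ω | r ≤ #{i | ω ∈ B i}} := by
    refine (measurable_indicator_const_iff (1 : ℝ)).1 ?_
    change Measurable (Set.indicator _ (1 : Ω → ℝ))
    rw [hpoint]
    exact Finset.measurable_sum _ fun k _ => (Finset.measurable_sum _ fun K _ =>
      measurable_const.indicator (hinter K)).const_mul _
  have hcount : ∀ k ∈ Icc r n,
      ∑ K ∈ powersetCard k univ, μ.real (⋂ i ∈ K, B i) = n.choose k * p k := by
    intro k hk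
    have hK : ∀ K ∈ powersetCard k (univ : Finset ι), μ.real (⋂ i ∈ K, B i) = p k := by
      intro K hK
      rw [mem_powersetCard] at hK
      rw [hp K (card_pos.1 (by grind)), hK.2]
    rw [sum_congr rfl hK, sum_const, card_powersetCard, card_univ, nsmul_eq_mul]
  rw [← integral_indicator_one hE, hpoint, integral_finsetSum _ fun k _ =>
    (integrable_finsetSum _ fun K _ => hintegrable K).const_mul _]
  refine sum_congr rfl fun k hk => ?_
  rw [integral_const_mul, integral_finsetSum _ fun K _ => hintegrable K]
  simp_rw [integral_indicator_one (hinter _)]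
  rw [hcount k hk]
  ring

noncomputable def firstPassageTime {β : Type*} [LinearOrder β] (f : ℝ≥0 → β) (e : β) : ℝ≥0∞ :=
  sInf ((↑) '' {t | e ≤ f t})

theorem coe_lt_firstPassageTime_iff {β : Type*} [LinearOrder β] [TopologicalSpace β]
    [OrderClosedTopology β] {f : ℝ≥0 → β} (hf : Monotone f) {t : ℝ≥0}
    (hrc : ContinuousWithinAt f (Set.Ici t) t) {e : β} :
    (t : ℝ≥0∞) < firstPassageTime f e ↔ f t < e := by
  constructor
  · intro h
    by_contra! hle
    exact h.not_ge (sInf_le ⟨t, hle, rfl⟩)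
  · intro hlt
    obtain ⟨u, htu, hu⟩ := mem_nhdsGE_iff_exists_Ico_subset.1 (hrc (Iio_mem_nhds hlt))
    refine (ENNReal.coe_lt_coe.2 htu).trans_le (le_sInf ?_)
    rintro _ ⟨s, hs, rfl⟩
    by_contra! hsu
    have : f s < e := by
      rcases le_total s t with hst | hts
      · exact (hf hst).trans_lt hlt
      · exact hu ⟨hts, ENNReal.coe_lt_coe.1 hsu⟩
    exact this.not_ge hs

def orderStat {ι α : Type*} [Fintype ι] [CompleteLinearOrder α] (x : ι → α) (m : ℕ) : α :=
  sInf {u | m ≤ #{i | x i ≤ u}}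

theorem lt_orderStat_iff {ι α : Type*} [Fintype ι] [CompleteLinearOrder α] {x : ι → α} {m : ℕ}
    {t : α} (ht : t ≠ ⊤) : t < orderStat x m ↔ #{i | x i ≤ t} < m := by
  constructor
  · intro h
    by_contra! hle
    exact h.not_ge (sInf_le hle)
  · intro hlt
    -- the least `x i` above `t` (`⊤` if there is none) is a lower bound of the set
    have htu : t < ({i | t < x i} : Finset ι).inf x :=
      (Finset.lt_inf_iff ht.lt_top).2 fun i hi => (mem_filter.1 hi).2
    refine htu.trans_le (le_sInf fun u (hu : m ≤ _) => ?_)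
    by_contra! hux
    have : #{i | x i ≤ u} ≤ #{i | x i ≤ t} := by
      refine card_le_card fun i hi => mem_filter.2 ⟨mem_univ i, ?_⟩
      by_contra! hti
      exact (hux.trans_le (inf_le (mem_filter.2 ⟨mem_univ i, hti⟩))).not_ge (mem_filter.1 hi).2
    exact (hu.trans this).not_gt hlt

theorem lt_orderStat_iff_le_card_lt {ι α : Type*} [Fintype ι] [CompleteLinearOrder α]
    {x : ι → α} {m : ℕ} (hm : m ≤ Fintype.card ι) {t : α} (ht : t ≠ ⊤) :
    t < orderStat x m ↔ Fintype.card ι - m + 1 ≤ #{i | t < x i} := by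
  have hsplit := card_filter_add_card_filter_not (s := univ) (fun i => t < x i)
  simp only [not_lt, card_univ] at hsplit
  rw [lt_orderStat_iff ht]
  omega

namespace ProbabilityTheory

variable {Ω : Type*} [MeasurableSpace Ω] {μ : Measure Ω}

theorem IndepFun.measure_preimage_prodMk_eq_lintegral {α β : Type*} [MeasurableSpace α]
    [MeasurableSpace β] [IsFiniteMeasure μ] {X : Ω → α} {Y : Ω → β} (hX : Measurable X)
    (hY : Measurable Y) (h : IndepFun X Y μ) {C : Set (α × β)} (hC : MeasurableSet C) :
    μ ((fun ω => (X ω, Y ω)) ⁻¹' C) = ∫⁻ ω, μ (Y ⁻¹' (Prod.mk (X ω) ⁻¹' C)) ∂μ := by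
  rw [← Measure.map_apply (hX.prodMk hY) hC,
    (indepFun_iff_map_prod_eq_prod_map_map hX.aemeasurable hY.aemeasurable).1 h,
    Measure.prod_apply hC, lintegral_map (measurable_measure_prodMk_left hC) hX]
  simp_rw [Measure.map_apply hY (measurable_prodMk_left hC)]

theorem Indep.indepFun_pi {ι κ β γ : Type*} [MeasurableSpace β] [MeasurableSpace γ]
    {X : ι → Ω → β} {Y : κ → Ω → γ}
    (h : Indep (⨆ i, MeasurableSpace.comap (X i) inferInstance)
      (⨆ j, MeasurableSpace.comap (Y j) inferInstance) μ) (j : κ) :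
    IndepFun (Y j) (fun ω i => X i ω) μ := by
  rw [IndepFun_iff_Indep]
  refine indep_of_indep_of_le_right (indep_of_indep_of_le_left h.symm
    (le_iSup (fun j => MeasurableSpace.comap (Y j) inferInstance) j)) ?_
  rw [MeasurableSpace.pi, MeasurableSpace.comap_iSup]
  exact iSup_mono fun i => MeasurableSpace.comap_comp.le

variable {ι : Type*} {ε : ι → Ω → ℝ}

theorem iIndepFun.measure_biInter_lt_eq_exp
    (hεtail : ∀ i, ∀ x : ℝ, 0 ≤ x → μ {ω | x < ε i ω} = ENNReal.ofReal (Real.exp (-x)))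
    (hε : iIndepFun ε μ) (K : Finset ι) {s : ℝ} (hs : 0 ≤ s) :
    μ (⋂ i ∈ K, {ω | s < ε i ω}) = ENNReal.ofReal (Real.exp (-(#K * s))) := by
  rw [hε.meas_biInter (s := fun i => {ω | s < ε i ω}) fun i _ =>
      ⟨Set.Ioi s, measurableSet_Ioi, rfl⟩,
    prod_congr rfl fun i _ => hεtail i s hs, prod_const, ← ENNReal.ofReal_pow (Real.exp_nonneg _),
    ← Real.exp_nat_mul, mul_neg]

theorem measure_biInter_lt_eq_lintegral_exp [Countable ι] [IsFiniteMeasure μ]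
    (hεtail : ∀ i, ∀ x : ℝ, 0 ≤ x → μ {ω | x < ε i ω} = ENNReal.ofReal (Real.exp (-x)))
    (hεm : ∀ i, Measurable (ε i)) (hε : iIndepFun ε μ) {g : Ω → ℝ} (hg : Measurable g)
    (hg0 : ∀ ω, 0 ≤ g ω) (hindep : IndepFun g (fun ω i => ε i ω) μ) (K : Finset ι) :
    μ (⋂ i ∈ K, {ω | g ω < ε i ω}) = ∫⁻ ω, ENNReal.ofReal (Real.exp (-(#K * g ω))) ∂μ := by
  set C : Set (ℝ × (ι → ℝ)) := ⋂ i ∈ K, {p | p.1 < p.2 i}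
  have hC : MeasurableSet C := K.measurableSet_biInter fun i _ =>
    measurableSet_lt measurable_fst ((measurable_pi_apply i).comp measurable_snd)
  calc μ (⋂ i ∈ K, {ω | g ω < ε i ω})
      = μ ((fun ω => (g ω, fun i => ε i ω)) ⁻¹' C) := by congr 1; ext; simp [C]
    _ = ∫⁻ ω, μ ((fun ω' i => ε i ω') ⁻¹' (Prod.mk (g ω) ⁻¹' C)) ∂μ :=
        hindep.measure_preimage_prodMk_eq_lintegral hg (measurable_pi_iff.2 hεm) hC
    _ = ∫⁻ ω, ENNReal.ofReal (Real.exp (-(#K * g ω))) ∂μ := by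
        refine lintegral_congr fun ω => ?_
        rw [← iIndepFun.measure_biInter_lt_eq_exp hεtail hε K (hg0 ω)]
        congr 1
        ext
        simp [C]

theorem measureReal_biInter_lt_eq_integral_exp [Countable ι] [IsFiniteMeasure μ]
    (hεtail : ∀ i, ∀ x : ℝ, 0 ≤ x → μ {ω | x < ε i ω} = ENNReal.ofReal (Real.exp (-x)))
    (hεm : ∀ i, Measurable (ε i)) (hε : iIndepFun ε μ) {g : Ω → ℝ} (hg : Measurable g)
    (hg0 : ∀ ω, 0 ≤ g ω) (hindep : IndepFun g (fun ω i => ε i ω) μ) (K : Finset ι) :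
    μ.real (⋂ i ∈ K, {ω | g ω < ε i ω}) = ∫ ω, Real.exp (-(#K * g ω)) ∂μ := by
  have hint : Integrable (fun ω => Real.exp (-(#K * g ω))) μ :=
    Integrable.of_bound (by fun_prop) 1 (ae_of_all _ fun ω => by
      rw [Real.norm_of_nonneg (Real.exp_nonneg _), Real.exp_le_one_iff, neg_nonpos]
      exact mul_nonneg (Nat.cast_nonneg _) (hg0 ω))
  rw [measureReal_def, measure_biInter_lt_eq_lintegral_exp hεtail hεm hε hg hg0 hindep K,
    ← ofReal_integral_eq_lintegral_ofReal hint (ae_of_all _ fun _ => Real.exp_nonneg _),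
    ENNReal.toReal_ofReal (integral_nonneg fun _ => Real.exp_nonneg _)]

end ProbabilityTheory

theorem lfmo_stmt11_general {Ω : Type*} [MeasurableSpace Ω] (μ : Measure Ω) [IsProbabilityMeasure μ]
    (n : ℕ)
    -- the Lévy subordinator: nondecreasing right-continuous paths starting at 0
    (S : ℝ≥0 → Ω → ℝ) (hSmeas : ∀ t, Measurable (S t))
    (hS0 : ∀ ω, S 0 ω = 0) (hSmono : ∀ ω, Monotone (fun t => S t ω))
    (hSrc : ∀ ω (t : ℝ≥0), ContinuousWithinAt (fun s => S s ω) (Set.Ici t) t)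
    -- iid unit-rate exponential triggers, independent of `S`
    (ε : Fin n → Ω → ℝ) (hεmeas : ∀ i, Measurable (ε i))
    (hεdist : ∀ i, ∀ x : ℝ, 0 ≤ x → μ {ω | x < ε i ω} = ENNReal.ofReal (Real.exp (-x)))
    (hεiid : iIndepFun ε μ)
    (hindep : Indep (⨆ i, MeasurableSpace.comap (ε i) inferInstance)
      (⨆ t : ℝ≥0, MeasurableSpace.comap (fun ω => S t ω) inferInstance) μ)
    -- the LFMO lifetimes: upcrossing times of the triggers (with `inf ∅ = ∞`)
    (T : Fin n → Ω → ℝ≥0∞)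
    (hT : ∀ i ω, T i ω = sInf ((fun t : ℝ≥0 => (t : ℝ≥0∞)) '' {t | ε i ω ≤ S t ω}))
    -- Laplace exponent: `E e^{-x S_t} = e^{-t ψ(x)}`
    (ψ : ℝ → ℝ)
    (hψ : ∀ (t : ℝ≥0) (x : ℝ), 0 < x →
      ∫ ω, Real.exp (-(x * S t ω)) ∂μ = Real.exp (-((t : ℝ) * ψ x)))
    -- the order statistics: `ordStat m ω` is the `m`-th smallest among `T_1 ω, …, T_n ω`
    (ordStat : ℕ → Ω → ℝ≥0∞)
    (hord : ∀ m ω, ordStat m ω =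
      sInf {u : ℝ≥0∞ | m ≤ (Finset.univ.filter (fun i => T i ω ≤ u)).card}) :
    ∀ m : ℕ, 1 ≤ m → m ≤ n → ∀ t : ℝ≥0,
      μ {ω | (t : ℝ≥0∞) < ordStat m ω} =
        ENNReal.ofReal (∑ k ∈ Finset.Icc (n - m + 1) n,
          Real.exp (-(ψ k * t)) * (n.choose k : ℝ) * ((k - 1).choose (n - m) : ℝ) *
            (-1 : ℝ) ^ (k + m - 1 - n)) := by
  intro m hm hmn t
  have hS_nonneg : ∀ ω, 0 ≤ S t ω := fun ω => hS0 ω ▸ hSmono ω (zero_le : 0 ≤ t)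
  set B : Fin n → Set Ω := fun i => {ω | S t ω < ε i ω}
  have hevent : {ω | (t : ℝ≥0∞) < ordStat m ω} = {ω | n - m + 1 ≤ #{i | ω ∈ B i}} := by
    ext ω
    have hT_gt : ∀ i, (t : ℝ≥0∞) < T i ω ↔ ω ∈ B i := fun i => by
      rw [hT]
      exact coe_lt_firstPassageTime_iff (hSmono ω) (hSrc ω t)
    rw [Set.mem_ofPred_eq, Set.mem_ofPred_eq, hord, ← orderStat,
      lt_orderStat_iff_le_card_lt (by simpa using hmn) coe_ne_top, Fintype.card_fin]
    simp only [hT_gt]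
  have hinter : ∀ K : Finset (Fin n), K.Nonempty →
      μ.real (⋂ i ∈ K, B i) = Real.exp (-(ψ #K * t)) := by
    intro K hK
    rw [measureReal_biInter_lt_eq_integral_exp hεdist hεmeas hεiid (hSmeas t) hS_nonneg
      (hindep.indepFun_pi t) K, hψ t _ (mod_cast hK.card_pos), mul_comm]
  rw [hevent, ← ofReal_measureReal, measureReal_setOf_le_card_eq_sum
    (fun i => measurableSet_lt (hSmeas t) (hεmeas i)) (p := fun k => Real.exp (-(ψ k * t)))
    hinter (by omega : 1 ≤ n - m + 1), Fintype.card_fin]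
  congr 1
  refine sum_congr rfl fun k hk => ?_
  rw [mem_Icc] at hk
  rw [show n - m + 1 - 1 = n - m by omega,
    show k + (n - m + 1) = (k + m - 1 - n) + 2 * (n - m + 1) by omega, pow_add, pow_mul]
  norm_num
  ring

/-- Marginal tail distribution of the `m`-th increasing order statistic of an
`n`-dimensional Lévy-frailty Marshall-Olkin vector with Laplace exponent `ψ`:
`P(T_{m:n} > t) = ∑_{k=n-m+1}^{n} e^{-ψ(k) t} C(n,k) C(k-1,n-m) (-1)^{k-n+m-1}`. -/
theorem lfmo_stmt11 {Ω : Type*} [MeasurableSpace Ω] (μ : Measure Ω) [IsProbabilityMeasure μ]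
    (n : ℕ) (hn : 0 < n)
    -- the Lévy subordinator: nondecreasing right-continuous paths starting at 0
    (S : ℝ≥0 → Ω → ℝ) (hSmeas : ∀ t, Measurable (S t))
    (hS0 : ∀ ω, S 0 ω = 0) (hSmono : ∀ ω, Monotone (fun t => S t ω))
    (hSrc : ∀ ω (t : ℝ≥0), ContinuousWithinAt (fun s => S s ω) (Set.Ici t) t)
    -- iid unit-rate exponential triggers, independent of `S`
    (ε : Fin n → Ω → ℝ) (hεmeas : ∀ i, Measurable (ε i))
    (hεdist : ∀ i, ∀ x : ℝ, 0 ≤ x → μ {ω | x < ε i ω} = ENNReal.ofReal (Real.exp (-x)))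
    (hεiid : iIndepFun ε μ)
    (hindep : Indep (⨆ i, MeasurableSpace.comap (ε i) inferInstance)
      (⨆ t : ℝ≥0, MeasurableSpace.comap (fun ω => S t ω) inferInstance) μ)
    -- the LFMO lifetimes: upcrossing times of the triggers (with `inf ∅ = ∞`)
    (T : Fin n → Ω → ℝ≥0∞)
    (hT : ∀ i ω, T i ω = sInf ((fun t : ℝ≥0 => (t : ℝ≥0∞)) '' {t | ε i ω ≤ S t ω}))
    -- Laplace exponent: `E e^{-x S_t} = e^{-t ψ(x)}`
    (ψ : ℝ → ℝ)
    (hψ : ∀ (t : ℝ≥0) (x : ℝ), 0 < x →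
      ∫ ω, Real.exp (-(x * S t ω)) ∂μ = Real.exp (-((t : ℝ) * ψ x)))
    -- the order statistics: `ordStat m ω` is the `m`-th smallest among `T_1 ω, …, T_n ω`
    (ordStat : ℕ → Ω → ℝ≥0∞)
    (hord : ∀ m ω, ordStat m ω =
      sInf {u : ℝ≥0∞ | m ≤ (Finset.univ.filter (fun i => T i ω ≤ u)).card}) :
    ∀ m : ℕ, 1 ≤ m → m ≤ n → ∀ t : ℝ≥0,
      μ {ω | (t : ℝ≥0∞) < ordStat m ω} =
        ENNReal.ofReal (∑ k ∈ Finset.Icc (n - m + 1) n,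
          Real.exp (-(ψ k * t)) * (n.choose k : ℝ) * ((k - 1).choose (n - m) : ℝ) *
            (-1 : ℝ) ^ (k + m - 1 - n)) :=
  lfmo_stmt11_general μ n S hSmeas hS0 hSmono hSrc ε hεmeas hεdist hεiid hindep T hT ψ hψ ordStat
    hord
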